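/- For any swap Schelling game (G,b,Λ), every swap equilibrium σ satisfies DoI(σ) ≥ max{(Δ(G)+1)b/Δ(G), b+1}, and every strategy profile σ' satisfies DoI(σ') ≤ min{(Δ(G)+1)b, n}. Consequently, for every swap equilibrium σ and every strategy profile σ*, DoI(σ*)/DoI(σ) ≤ min{Δ(G), n/(b+1), (Δ(G)+1)b/(b+1)}. -/

import Mathlib

/-!
A non-segregated agent has a neighbour of the other colour, and that neighbour is non-segregated
as well; hence the non-segregated agents of either colour are at most `Δ` times as many as those
of the other colour. In a swap equilibrium some colour has no segregated agent at all: a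
segregated blue and a segregated red agent are non-adjacent, so by trading places each would go
from `p 1 = 0` to `p (1 / (δ + 1)) > 0`. That colour has at least `b` agents, all
non-segregated, which gives the lower bounds; the upper bound counts the `b` blue agents and at
most `Δ b` red agents adjacent to them.
-/


open Finset

namespace SwapSchelling

variable {V : Type*} [Fintype V] [DecidableEq V]

open scoped Classical in
/-- The closed neighborhood `N[v]` of a node `v` in `G`, as a `Finset`. -/
noncomputable def closedNbhd (G : SimpleGraph V) (v : V) : Finset V :=
  univ.filter (fun u => u = v ∨ G.Adj v u)

open scoped Classical in
/-- The degree `δ(v)` of a node `v` in `G`. -/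
noncomputable def deg (G : SimpleGraph V) (v : V) : ℕ :=
  (univ.filter (fun u => G.Adj v u)).card

/-- The maximum degree `Δ(G)`. -/
noncomputable def maxDeg (G : SimpleGraph V) : ℕ := univ.sup (deg G)

/-- The minimum degree `δ(G)`. -/
noncomputable def minDeg (G : SimpleGraph V) : ℕ := sInf (Set.range (deg G))

open scoped Classical in
/-- `frac G c v` is the fraction of nodes in the closed neighborhood of `v` that have
the same color as `v` (that is, `f_i(σ)` for the agent `i` occupying node `v`). -/
noncomputable def frac (G : SimpleGraph V) (c : V → Bool) (v : V) : ℝ :=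
  (((closedNbhd G v).filter (fun u => c u = c v)).card : ℝ) / ((closedNbhd G v).card : ℝ)

/-- The coloring obtained from `c` after the agents on nodes `v` and `w` swap positions. -/
def swapColor (c : V → Bool) (v w : V) : V → Bool := c ∘ Equiv.swap v w

/-- A single-peaked utility function `p` with peak at `Λ`: `p 0 = 0`, `p` is strictly
increasing on `[0,Λ]`, `p Λ = 1`, and `p x = p (Λ(1-x)/(1-Λ))` for `x ∈ [Λ,1]`. -/
structure IsSinglePeaked (p : ℝ → ℝ) (Λ : ℝ) : Prop where
  peak_mem : Λ ∈ Set.Ioo (0 : ℝ) 1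
  map_zero : p 0 = 0
  strictMonoOn : StrictMonoOn p (Set.Icc 0 Λ)
  map_peak : p Λ = 1
  symm : ∀ x ∈ Set.Icc Λ 1, p x = p (Λ * (1 - x) / (1 - Λ))

/-- A strategy profile: a 2-coloring of the nodes with exactly `b` blue (`true`) nodes. -/
def IsProfile (c : V → Bool) (b : ℕ) : Prop :=
  (univ.filter (fun v => c v = true)).card = b

/-- The structural data of a swap Schelling game `(G, b, Λ)` with utility function `p`:
`G` is connected, there are `b` blue agents with `1 ≤ b ≤ n/2`, and `p` is a
single-peaked utility function with peak `Λ`. -/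
structure IsGame (G : SimpleGraph V) (b : ℕ) (Λ : ℝ) (p : ℝ → ℝ) : Prop where
  connected : G.Connected
  one_le_b : 1 ≤ b
  b_le_half : 2 * b ≤ Fintype.card V
  singlePeaked : IsSinglePeaked p Λ

/-- The swap of the two (differently colored) agents occupying nodes `v` and `w`
is profitable: both agents strictly increase their utility. -/
def ProfitableSwap (G : SimpleGraph V) (p : ℝ → ℝ) (c : V → Bool) (v w : V) : Prop :=
  c v ≠ c w ∧
  p (frac G (swapColor c v w) w) > p (frac G c v) ∧
  p (frac G (swapColor c v w) v) > p (frac G c w)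

/-- A swap equilibrium: no profitable swap exists. -/
def IsSwapEquilibrium (G : SimpleGraph V) (p : ℝ → ℝ) (c : V → Bool) : Prop :=
  ∀ v w, ¬ ProfitableSwap G p c v w

open scoped Classical in
/-- The degree of integration: the number of non-segregated agents. -/
noncomputable def DoI (G : SimpleGraph V) (c : V → Bool) : ℕ :=
  (univ.filter (fun v => frac G c v ≠ 1)).card

open scoped Classical in
/-- The number of monochromatic edges of `G` under the coloring `c`. -/
noncomputable def Phi (G : SimpleGraph V) (c : V → Bool) : ℕ :=
  (G.edgeFinset.filter (fun e => ∀ u ∈ e, ∀ w ∈ e, c u = c w)).card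

open scoped Classical in
/-- The number of edges of `G`. -/
noncomputable def numEdges (G : SimpleGraph V) : ℕ :=
  (univ.filter (fun e : Sym2 V => e ∈ G.edgeSet)).card

/-- A finset of nodes is an independent set of `G`. -/
def IsIndepSet (G : SimpleGraph V) (s : Finset V) : Prop :=
  ∀ u ∈ s, ∀ w ∈ s, ¬ G.Adj u w

open scoped Classical in
/-- The independence number `α(G)`. -/
noncomputable def indepNum (G : SimpleGraph V) : ℕ :=
  univ.sup (fun s : Finset V => if IsIndepSet G s then s.card else 0)

open scoped Classical in
/-- The degree of `v` inside the subgraph of `G` induced by the node set `s`. -/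
noncomputable def degOn (G : SimpleGraph V) (s : Finset V) (v : V) : ℕ :=
  (s.filter (fun u => G.Adj v u)).card


section Neighbourhoods

open scoped Classical

variable {G : SimpleGraph V} {c : V → Bool} {v w : V}

lemma mem_closedNbhd {u : V} : u ∈ closedNbhd G v ↔ u = v ∨ G.Adj v u := by
  simp [closedNbhd]

omit [DecidableEq V] in
lemma deg_le_maxDeg (G : SimpleGraph V) (v : V) : deg G v ≤ maxDeg G :=
  le_sup (mem_univ v)

omit [DecidableEq V] in
lemma one_le_deg_of_nontrivial [Nontrivial V] (hG : G.Connected) (v : V) : 1 ≤ deg G v := by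
  obtain ⟨u, hu⟩ := hG.preconnected.exists_adj_of_nontrivial v
  exact card_pos.2 ⟨u, by simp [hu]⟩

lemma card_closedNbhd (G : SimpleGraph V) (v : V) : #(closedNbhd G v) = deg G v + 1 := by
  have h : closedNbhd G v = insert v (univ.filter fun u => G.Adj v u) := by
    ext u; simp [closedNbhd]
  rw [h, card_insert_of_notMem (by simp), deg]

lemma frac_eq_one_iff : frac G c v = 1 ↔ ∀ u ∈ closedNbhd G v, c u = c v := by
  have hpos : (0 : ℝ) < #(closedNbhd G v) := by
    rw [card_closedNbhd]; positivity
  rw [frac, div_eq_one_iff_eq hpos.ne', Nat.cast_inj, card_filter_eq_iff]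

lemma frac_ne_one_of_adj (hadj : G.Adj v u) (hc : c u ≠ c v) : frac G c v ≠ 1 :=
  fun h => hc (frac_eq_one_iff.1 h u (mem_closedNbhd.2 (Or.inr hadj)))

lemma exists_adj_of_frac_ne_one (h : frac G c v ≠ 1) : ∃ u, G.Adj v u ∧ c u ≠ c v := by
  obtain ⟨u, hu, hcu⟩ := not_forall₂.1 (mt frac_eq_one_iff.2 h)
  rcases mem_closedNbhd.1 hu with rfl | hadj
  · exact absurd rfl hcu
  · exact ⟨u, hadj, hcu⟩

omit [DecidableEq V] in
lemma card_le_card_mul_maxDeg {s t : Finset V} (h : ∀ v ∈ s, ∃ u ∈ t, G.Adj u v) :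
    #s ≤ #t * maxDeg G := by
  calc #s ≤ #(t.biUnion fun u => univ.filter (G.Adj u)) :=
        card_le_card fun v hv => by
          obtain ⟨u, hu, hadj⟩ := h v hv
          exact mem_biUnion.2 ⟨u, hu, by simpa using hadj⟩
    _ ≤ ∑ u ∈ t, #(univ.filter (G.Adj u)) := card_biUnion_le
    _ ≤ ∑ _u ∈ t, maxDeg G := sum_le_sum fun u _ => deg_le_maxDeg G u
    _ = #t * maxDeg G := by rw [sum_const, smul_eq_mul]

end Neighbourhoods

namespace IsSinglePeaked

variable {p : ℝ → ℝ} {Λ : ℝ}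

lemma map_one (hp : IsSinglePeaked p Λ) : p 1 = 0 := by
  simpa [hp.map_zero] using hp.symm 1 ⟨hp.peak_mem.2.le, le_rfl⟩

lemma pos_of_mem_Ioo (hp : IsSinglePeaked p Λ) {x : ℝ} (hx : x ∈ Set.Ioo 0 1) : 0 < p x := by
  obtain ⟨hΛ0, hΛ1⟩ := hp.peak_mem
  have pos_below_peak : ∀ y ∈ Set.Ioc 0 Λ, 0 < p y := fun y hy => by
    simpa [hp.map_zero] using hp.strictMonoOn ⟨le_rfl, hΛ0.le⟩ ⟨hy.1.le, hy.2⟩ hy.1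
  rcases le_or_gt x Λ with hxΛ | hΛx
  · exact pos_below_peak x ⟨hx.1, hxΛ⟩
  · rw [hp.symm x ⟨hΛx.le, hx.2.le⟩]
    refine pos_below_peak _ ⟨div_pos (mul_pos hΛ0 (by linarith [hx.2])) (by linarith), ?_⟩
    rw [div_le_iff₀ (by linarith)]
    nlinarith

end IsSinglePeaked

section Swap

open scoped Classical

variable {G : SimpleGraph V} {c : V → Bool} {v w : V}

omit [Fintype V] in
lemma swapColor_comm (c : V → Bool) (v w : V) : swapColor c v w = swapColor c w v := by
  rw [swapColor, swapColor, Equiv.swap_comm]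

lemma frac_swapColor_of_frac_eq_one (hw : frac G c w = 1) (hc : c v ≠ c w) :
    frac G (swapColor c v w) w = 1 / (deg G w + 1) := by
  have hseg := frac_eq_one_iff.1 hw
  have only_self :
      (closedNbhd G w).filter (fun u => swapColor c v w u = swapColor c v w w) = {w} := by
    ext u
    simp only [mem_filter, mem_singleton, swapColor, Function.comp_apply, Equiv.swap_apply_right]
    constructor
    · rintro ⟨hu, hcu⟩
      by_contra huw
      have huv : u ≠ v := by rintro rfl; exact hc (hseg u hu)
      rw [Equiv.swap_apply_of_ne_of_ne huv huw] at hcu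
      exact hc (hcu ▸ hseg u hu)
    · rintro rfl
      exact ⟨mem_closedNbhd.2 (Or.inl rfl), by simp⟩
  rw [frac, only_self, card_singleton, card_closedNbhd]
  push_cast
  ring

lemma profitableSwap_of_frac_eq_one {p : ℝ → ℝ} {Λ : ℝ} (hG : G.Connected)
    (hp : IsSinglePeaked p Λ) (hc : c v ≠ c w) (hv : frac G c v = 1) (hw : frac G c w = 1) :
    ProfitableSwap G p c v w := by
  have : Nontrivial V := nontrivial_of_ne v w fun h => hc (h ▸ rfl)
  have utility_pos : ∀ u, 0 < p (1 / (deg G u + 1)) := fun u => by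
    have := one_le_deg_of_nontrivial hG u
    refine hp.pos_of_mem_Ioo ⟨by positivity, (div_lt_one (by positivity)).2 ?_⟩
    exact_mod_cast Nat.lt_succ_of_le this
  refine ⟨hc, ?_, ?_⟩
  · rw [frac_swapColor_of_frac_eq_one hw hc, hv, hp.map_one]
    exact utility_pos w
  · rw [swapColor_comm, frac_swapColor_of_frac_eq_one hv hc.symm, hw, hp.map_one]
    exact utility_pos v

end Swap

section Integration

open scoped Classical

variable {G : SimpleGraph V} {c : V → Bool} {b : ℕ}

noncomputable def nonSegregated (G : SimpleGraph V) (c : V → Bool) (χ : Bool) : Finset V :=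
  univ.filter fun v => c v = χ ∧ frac G c v ≠ 1

lemma DoI_eq_card_add_card :
    DoI G c = #(nonSegregated G c true) + #(nonSegregated G c false) := by
  rw [DoI, ← card_filter_add_card_filter_not (fun v => c v = true), filter_filter, filter_filter]
  simp only [nonSegregated, Bool.not_eq_true, and_comm]

lemma DoI_le_card (G : SimpleGraph V) (c : V → Bool) : DoI G c ≤ Fintype.card V :=
  card_le_univ _

lemma nonSegregated_subset (χ : Bool) :
    nonSegregated G c χ ⊆ univ.filter fun v => c v = χ :=
  monotone_filter_right _ fun _ _ h => h.1

lemma card_nonSegregated_le_mul_maxDeg (χ : Bool) :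
    #(nonSegregated G c χ) ≤ #(nonSegregated G c !χ) * maxDeg G := by
  refine card_le_card_mul_maxDeg fun v hv => ?_
  obtain ⟨hcv, hv⟩ := (mem_filter.1 hv).2
  obtain ⟨u, hadj, hcu⟩ := exists_adj_of_frac_ne_one hv
  refine ⟨u, mem_filter.2 ⟨mem_univ u, ?_, frac_ne_one_of_adj hadj.symm hcu.symm⟩, hadj.symm⟩
  rw [← hcv]
  exact Bool.eq_not.2 hcu

omit [DecidableEq V] in
lemma IsProfile.le_card_filter (hc : IsProfile c b) (hb : 2 * b ≤ Fintype.card V) (χ : Bool) :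
    b ≤ #(univ.filter fun v => c v = χ) := by
  cases χ
  · have := card_filter_add_card_filter_not (s := univ) (fun v => c v = true)
    simp only [Bool.not_eq_true, card_univ] at this
    unfold IsProfile at hc
    omega
  · exact hc.ge

lemma IsSwapEquilibrium.exists_nonSegregated_eq {p : ℝ → ℝ} {Λ : ℝ} (hG : G.Connected)
    (hp : IsSinglePeaked p Λ) (he : IsSwapEquilibrium G p c) :
    ∃ χ, nonSegregated G c χ = univ.filter fun v => c v = χ := by
  by_contra! h
  have segregated_of (χ : Bool) : ∃ v, c v = χ ∧ frac G c v = 1 := by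
    obtain ⟨v, hv⟩ := exists_of_ssubset (ssubset_of_subset_of_ne (nonSegregated_subset χ) (h χ))
    simp only [nonSegregated, mem_filter, mem_univ, true_and, not_and, not_not] at hv
    exact ⟨v, hv.1, hv.2 hv.1⟩
  obtain ⟨v, hcv, hv⟩ := segregated_of true
  obtain ⟨w, hcw, hw⟩ := segregated_of false
  exact he v w (profitableSwap_of_frac_eq_one hG hp (by simp [hcv, hcw]) hv hw)

lemma IsGame.le_DoI {Λ : ℝ} {p : ℝ → ℝ} (hgame : IsGame G b Λ p) (hc : IsProfile c b)
    (he : IsSwapEquilibrium G p c) :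
    (maxDeg G + 1) * b ≤ maxDeg G * DoI G c ∧ b + 1 ≤ DoI G c := by
  obtain ⟨χ, hχ⟩ := he.exists_nonSegregated_eq hgame.connected hgame.singlePeaked
  have hx : b ≤ #(nonSegregated G c χ) := hχ ▸ hc.le_card_filter hgame.b_le_half χ
  have hxy := card_nonSegregated_le_mul_maxDeg (G := G) (c := c) χ
  have hDoI : DoI G c = #(nonSegregated G c χ) + #(nonSegregated G c !χ) := by
    cases χ <;> simp only [DoI_eq_card_add_card, Bool.not_true, Bool.not_false, add_comm]
  have hb := hgame.one_le_b
  constructor <;> nlinarith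

lemma IsProfile.DoI_le (hc : IsProfile c b) : DoI G c ≤ (maxDeg G + 1) * b := by
  have hblue : #(nonSegregated G c true) ≤ b := hc ▸ card_le_card (nonSegregated_subset true)
  have hred : #(nonSegregated G c false) ≤ #(nonSegregated G c true) * maxDeg G :=
    card_nonSegregated_le_mul_maxDeg false
  rw [DoI_eq_card_add_card]
  nlinarith

end Integration

lemma add_one_mul_div_le_of_le_mul {Δ b D : ℕ} (hb : 0 < b) (h : (Δ + 1) * b ≤ Δ * D) :
    ((Δ + 1) * b : ℝ) / Δ ≤ D := by
  have hΔ : 0 < Δ := Nat.pos_of_ne_zero fun hΔ => by simp [hΔ] at h; omega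
  rw [div_le_iff₀ (by exact_mod_cast hΔ)]
  exact_mod_cast h.trans_eq (mul_comm _ _)

lemma div_le_min_of_le_mul {Δ n b D Dstar : ℕ} (hD : b + 1 ≤ D) (h : (Δ + 1) * b ≤ Δ * D)
    (hstar : Dstar ≤ min ((Δ + 1) * b) n) :
    (Dstar : ℝ) / D ≤ min (Δ : ℝ) (min ((n : ℝ) / (b + 1)) (((Δ + 1) * b : ℝ) / (b + 1))) := by
  have hD' : (b + 1 : ℝ) ≤ D := by exact_mod_cast hD
  have h' : ((Δ + 1) * b : ℝ) ≤ Δ * D := by exact_mod_cast h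
  have hstar₁ : (Dstar : ℝ) ≤ (Δ + 1) * b := by exact_mod_cast (le_min_iff.1 hstar).1
  have hstar₂ : (Dstar : ℝ) ≤ n := by exact_mod_cast (le_min_iff.1 hstar).2
  have hb : (0 : ℝ) < b + 1 := by positivity
  have hDpos : (0 : ℝ) < D := hb.trans_le hD'
  refine le_min ((div_le_iff₀ hDpos).2 (by linarith)) (le_min ?_ ?_) <;>
    rw [div_le_div_iff₀ hDpos hb] <;>
    nlinarith [Dstar.cast_nonneg (α := ℝ), n.cast_nonneg (α := ℝ)]

/-- Every swap equilibrium `σ` satisfies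
`DoI(σ) ≥ max {(Δ(G)+1)·b/Δ(G), b+1}`, every strategy profile `σ'` satisfies
`DoI(σ') ≤ min {(Δ(G)+1)·b, n}`, and consequently for every swap equilibrium `σ` and
every profile `σ*`, `DoI(σ*)/DoI(σ) ≤ min {Δ(G), n/(b+1), (Δ(G)+1)·b/(b+1)}`. -/
theorem price_of_anarchy_general_graphs
    {V : Type*} [Fintype V] [DecidableEq V] (G : SimpleGraph V) (b : ℕ) (Λ : ℝ) (p : ℝ → ℝ)
    (hgame : IsGame G b Λ p) :
    (∀ c : V → Bool, IsProfile c b → IsSwapEquilibrium G p c →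
        ((maxDeg G + 1) * b : ℝ) / (maxDeg G : ℝ) ≤ (DoI G c : ℝ) ∧ b + 1 ≤ DoI G c) ∧
    (∀ c : V → Bool, IsProfile c b →
        DoI G c ≤ min ((maxDeg G + 1) * b) (Fintype.card V)) ∧
    (∀ c cstar : V → Bool, IsProfile c b → IsProfile cstar b → IsSwapEquilibrium G p c →
        (DoI G cstar : ℝ) / (DoI G c : ℝ) ≤
          min (maxDeg G : ℝ)
            (min ((Fintype.card V : ℝ) / ((b : ℝ) + 1))
              (((maxDeg G + 1) * b : ℝ) / ((b : ℝ) + 1)))) := by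
  have upper (c : V → Bool) (hc : IsProfile c b) :
      DoI G c ≤ min ((maxDeg G + 1) * b) (Fintype.card V) :=
    le_min hc.DoI_le (DoI_le_card G c)
  refine ⟨fun c hc he => ?_, upper, fun c cstar hc hcstar he => ?_⟩
  · obtain ⟨hmul, hsucc⟩ := hgame.le_DoI hc he
    exact ⟨add_one_mul_div_le_of_le_mul hgame.one_le_b hmul, hsucc⟩
  · obtain ⟨hmul, hsucc⟩ := hgame.le_DoI hc he
    exact div_le_min_of_le_mul hsucc hmul (upper cstar hcstar)

end SwapSchelling
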